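/- Let a, b > 0. The maximum over all weights w ≥ b/a of the length of the set {h < 0 : f'(w·h)·w ≥ 1} equals a·exp(−1), attained uniquely at w = exp(1)·b/a. -/

import Mathlib

/-!
The set is the interval `[-(b/w) log t, 0)` with `t = w a / b ≥ 1`, so its length is
`a · (log t) / t`. Since `log x ≤ x - 1` with equality only at `x = 1`, applied at `x = t / e`,
`log t / t ≤ 1 / e` with equality only at `t = e`.
-/

open Real MeasureTheory Set

namespace Real

lemma log_le_mul_exp_neg_one {t : ℝ} (ht : 0 < t) : log t ≤ t * exp (-1) := by
  have h := log_le_sub_one_of_pos (mul_pos ht (exp_pos (-1)))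
  rw [log_mul ht.ne' (exp_pos _).ne', log_exp] at h
  linarith

lemma log_div_self_le_exp_neg_one {t : ℝ} (ht : 0 < t) : log t / t ≤ exp (-1) := by
  rw [div_le_iff₀ ht, mul_comm]
  exact log_le_mul_exp_neg_one ht

lemma log_div_self_eq_exp_neg_one_iff {t : ℝ} (ht : 0 < t) :
    log t / t = exp (-1) ↔ t = exp 1 := by
  refine ⟨fun heq => ?_, fun h => by rw [h, log_exp, exp_neg, one_div]⟩
  by_contra hne
  have hne_one : t * exp (-1) ≠ 1 := by
    rwa [exp_neg, ← div_eq_mul_inv, ne_eq, div_eq_one_iff_eq (exp_pos 1).ne']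
  have h := log_lt_sub_one_of_pos (mul_pos ht (exp_pos (-1))) hne_one
  rw [log_mul ht.ne' (exp_pos _).ne', log_exp] at h
  rw [div_eq_iff ht.ne'] at heq
  linarith

end Real

lemma one_le_mul_exp_mul_iff {c k h : ℝ} (hc : 0 < c) (hk : 0 < k) :
    1 ≤ c * exp (k * h) ↔ -log c / k ≤ h := by
  rw [← exp_log hc, ← exp_add, one_le_exp_iff, div_le_iff₀ hk, log_exp]
  constructor <;> intro <;> linarith

lemma setOf_neg_and_one_le_mul_exp_mul {c k : ℝ} (hc : 0 < c) (hk : 0 < k) :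
    {h : ℝ | h < 0 ∧ 1 ≤ c * exp (k * h)} = Ico (-log c / k) 0 := by
  ext h
  rw [mem_ofPred_eq, one_le_mul_exp_mul_iff hc hk, and_comm, mem_Ico]

lemma volume_setOf_neg_and_one_le_mul_exp_mul {c k : ℝ} (hc : 1 ≤ c) (hk : 0 < k) :
    (volume {h : ℝ | h < 0 ∧ 1 ≤ c * exp (k * h)}).toReal = log c / k := by
  rw [setOf_neg_and_one_le_mul_exp_mul (by linarith) hk, volume_Ico, zero_sub, neg_div,
    neg_neg, ENNReal.toReal_ofReal (div_nonneg (log_nonneg hc) hk.le)]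

lemma pelu_interval_length_eq {a b w : ℝ} (ha : 0 < a) (hb : 0 < b) (hw : b / a ≤ w) :
    (volume {h : ℝ | h < 0 ∧ 1 ≤ w * (a / b) * exp (w * h / b)}).toReal
      = a * (log (w * (a / b)) / (w * (a / b))) := by
  have hw₀ : 0 < w := (div_pos hb ha).trans_le hw
  have hc : 1 ≤ w * (a / b) := by
    rwa [← div_le_iff₀ (div_pos ha hb), one_div_div]
  simp_rw [mul_div_right_comm w _ b]
  rw [volume_setOf_neg_and_one_le_mul_exp_mul hc (div_pos hw₀ hb)]
  field_simp

theorem pelu_max_interval_length (a b : ℝ) (ha : 0 < a) (hb : 0 < b) :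
    (∀ w : ℝ, b / a ≤ w →
      (MeasureTheory.volume
        {h : ℝ | h < 0 ∧ 1 ≤ w * (a / b) * Real.exp (w * h / b)}).toReal
        ≤ a * Real.exp (-1)) ∧
    (∀ w : ℝ, b / a ≤ w →
      ((MeasureTheory.volume
        {h : ℝ | h < 0 ∧ 1 ≤ w * (a / b) * Real.exp (w * h / b)}).toReal
        = a * Real.exp (-1) ↔ w = Real.exp 1 * (b / a))) := by
  have hpos : ∀ w, b / a ≤ w → 0 < w * (a / b) := fun w hw =>
    mul_pos ((div_pos hb ha).trans_le hw) (div_pos ha hb)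
  refine ⟨fun w hw => ?_, fun w hw => ?_⟩
  · rw [pelu_interval_length_eq ha hb hw]
    exact mul_le_mul_of_nonneg_left (log_div_self_le_exp_neg_one (hpos w hw)) ha.le
  · rw [pelu_interval_length_eq ha hb hw, mul_right_inj' ha.ne',
      log_div_self_eq_exp_neg_one_iff (hpos w hw), ← eq_div_iff (div_pos ha hb).ne',
      div_eq_mul_inv, inv_div]
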